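/- arXiv:2203.09670 — 2 statements merged into one kernel-verified Lean document; each statement's English description precedes it below -/
import Mathlib

section
/- Let S and n be positive integers, let γ ∈ (0,1), let P ∈ ℝ^{S×S} be a row-stochastic matrix (all entries nonnegative and each row summing to 1), and let d ∈ ℝ^S be a probability vector (nonnegative entries summing to 1) that is stationary for P, i.e. d_j = Σ_i d_i P_{ij} for every j. Let D = diag(d) and let √D denote its entrywise square root. Let Π̄ ∈ ℝ^{S×S} be an orthogonal projection matrix (Π̄ᵀ = Π̄ and Π̄² = Π̄), let Φ ∈ ℝ^{n×S} be a matrix whose i-th column is φ_i ∈ ℝ^n, and set M = Π̄ √D (I − γP) Φᵀ. Then for every c ∈ ℝ^S, the gradient of the quadratic loss ω ↦ (1/2)‖Mω − c‖², i.e. the map ω ↦ Mᵀ(Mω − c), is Lipschitz continuous with constant ℓ = (1+γ)² · max_i ‖φ_i‖²: for all ω₁, ω₂ ∈ ℝ^n, ‖Mᵀ(Mω₁ − c) − Mᵀ(Mω₂ − c)‖ ≤ (1+γ)² (max_i ‖φ_i‖²) ‖ω₁ − ω₂‖. -/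
open scoped BigOperators

/-- Euclidean norm of a vector in `ℝ^k`. -/
noncomputable def enorm {k : ℕ} (v : Fin k → ℝ) : ℝ := Real.sqrt (∑ i, (v i) ^ 2)

/-!
The gradient difference is `MᵀM (ω₁ - ω₂)` and `‖MᵀM‖ = ‖M‖²` for the `L²` operator norm, so it
suffices to show `‖M‖ ≤ (1 + γ) maxᵢ ‖φᵢ‖`. The projector `Π̄` has norm at most `1`; by Jensen's
inequality and stationarity of `d`, `P` is a contraction for the weighted norm `x ↦ ‖√D x‖`; and
`‖√D Φᵀ x‖² = ∑ᵢ dᵢ ⟪φᵢ, x⟫² ≤ maxᵢ ‖φᵢ‖² ‖x‖²` because `d` is a probability vector.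
-/

open WithLp Matrix
open scoped Matrix.Norms.L2Operator

theorem enorm_eq_norm_toLp {k : ℕ} (v : Fin k → ℝ) :
    _root_.enorm v = ‖(toLp 2 v : EuclideanSpace ℝ (Fin k))‖ := by
  rw [EuclideanSpace.norm_eq]
  simp [_root_.enorm]

namespace Matrix

variable {ι κ : Type*} [Fintype ι] [Fintype κ] [DecidableEq κ]

theorem l2_opNorm_le_of_mulVec_le {A : Matrix ι κ ℝ} {K : ℝ} (hK : 0 ≤ K)
    (h : ∀ x, ‖(toLp 2 (A *ᵥ x) : EuclideanSpace ℝ ι)‖ ≤ K * ‖(toLp 2 x : EuclideanSpace ℝ κ)‖) :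
    ‖A‖ ≤ K := by
  rw [l2_opNorm_def]
  exact ContinuousLinearMap.opNorm_le_bound _ hK fun x => h x.ofLp

theorem l2_opNorm_le_one_of_isHermitian_of_isIdempotentElem {𝕜 : Type*} [RCLike 𝕜] [DecidableEq ι]
    {Q : Matrix ι ι 𝕜} (hQ : Q.IsHermitian) (hQQ : IsIdempotentElem Q) : ‖Q‖ ≤ 1 := by
  have h : ‖Q‖ = ‖Q‖ * ‖Q‖ := by
    rw [← l2_opNorm_conjTranspose_mul_self, hQ.eq, hQQ.eq]
  nlinarith [norm_nonneg Q]

end Matrix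

theorem sum_mul_sq_mulVec_le_of_stationary {ι : Type*} [Fintype ι] {P : Matrix ι ι ℝ}
    {d : ι → ℝ} (hPnn : ∀ i j, 0 ≤ P i j) (hProw : ∀ i, ∑ j, P i j = 1) (hdnn : ∀ i, 0 ≤ d i)
    (hstat : ∀ j, d j = ∑ i, d i * P i j) (u : ι → ℝ) :
    ∑ i, d i * (P *ᵥ u) i ^ 2 ≤ ∑ i, d i * u i ^ 2 := by
  have jensen : ∀ i, (P *ᵥ u) i ^ 2 ≤ ∑ j, P i j * u j ^ 2 := fun i => by
    simpa [mulVec, dotProduct] using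
      (even_two.convexOn_pow (𝕜 := ℝ)).map_sum_le (t := Finset.univ) (w := P i) (p := u)
        (fun j _ => hPnn i j) (hProw i) (fun j _ => Set.mem_univ _)
  calc ∑ i, d i * (P *ᵥ u) i ^ 2 ≤ ∑ i, d i * ∑ j, P i j * u j ^ 2 :=
        Finset.sum_le_sum fun i _ => mul_le_mul_of_nonneg_left (jensen i) (hdnn i)
    _ = ∑ j, (∑ i, d i * P i j) * u j ^ 2 := by
        simp only [Finset.mul_sum, Finset.sum_mul, mul_assoc]
        exact Finset.sum_comm
    _ = ∑ j, d j * u j ^ 2 := by simp only [← hstat]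

section Weighted

variable {ι κ : Type*} [Fintype ι] [DecidableEq ι] [Fintype κ] [DecidableEq κ] {d : ι → ℝ}

theorem norm_toLp_sqrt_diagonal_mulVec_sq (hdnn : ∀ i, 0 ≤ d i) (v : ι → ℝ) :
    ‖(toLp 2 (diagonal (fun i => √(d i)) *ᵥ v) : EuclideanSpace ℝ ι)‖ ^ 2 = ∑ i, d i * v i ^ 2 := by
  simp [EuclideanSpace.real_norm_sq_eq, mulVec_diagonal, mul_pow, Real.sq_sqrt (hdnn _)]

theorem norm_toLp_sqrt_diagonal_mulVec_mulVec_le {P : Matrix ι ι ℝ} (hPnn : ∀ i j, 0 ≤ P i j)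
    (hProw : ∀ i, ∑ j, P i j = 1) (hdnn : ∀ i, 0 ≤ d i) (hstat : ∀ j, d j = ∑ i, d i * P i j)
    (u : ι → ℝ) :
    ‖(toLp 2 (diagonal (fun i => √(d i)) *ᵥ (P *ᵥ u)) : EuclideanSpace ℝ ι)‖ ≤
      ‖(toLp 2 (diagonal (fun i => √(d i)) *ᵥ u) : EuclideanSpace ℝ ι)‖ := by
  rw [← sq_le_sq₀ (norm_nonneg _) (norm_nonneg _), norm_toLp_sqrt_diagonal_mulVec_sq hdnn,
    norm_toLp_sqrt_diagonal_mulVec_sq hdnn]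
  exact sum_mul_sq_mulVec_le_of_stationary hPnn hProw hdnn hstat u

theorem l2_opNorm_sqrt_diagonal_mul_mul_le {P : Matrix ι ι ℝ} (hPnn : ∀ i j, 0 ≤ P i j)
    (hProw : ∀ i, ∑ j, P i j = 1) (hdnn : ∀ i, 0 ≤ d i) (hstat : ∀ j, d j = ∑ i, d i * P i j)
    (A : Matrix ι κ ℝ) :
    ‖diagonal (fun i => √(d i)) * P * A‖ ≤ ‖diagonal (fun i => √(d i)) * A‖ := by
  refine l2_opNorm_le_of_mulVec_le (norm_nonneg _) fun x => ?_
  rw [Matrix.mul_assoc, ← mulVec_mulVec, ← mulVec_mulVec]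
  refine (norm_toLp_sqrt_diagonal_mulVec_mulVec_le hPnn hProw hdnn hstat _).trans ?_
  rw [mulVec_mulVec]
  exact l2_opNorm_mulVec _ (toLp 2 x)

theorem l2_opNorm_sqrt_diagonal_mul_le (hdnn : ∀ i, 0 ≤ d i) (hdsum : ∑ i, d i = 1)
    {A : Matrix ι κ ℝ} {m : ℝ} (hA : ∀ i, ‖(toLp 2 (A i) : EuclideanSpace ℝ κ)‖ ^ 2 ≤ m) :
    ‖diagonal (fun i => √(d i)) * A‖ ≤ √m := by
  refine l2_opNorm_le_of_mulVec_le (Real.sqrt_nonneg m) fun x => ?_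
  obtain ⟨i₀, -, -⟩ := Finset.exists_ne_zero_of_sum_ne_zero (hdsum ▸ one_ne_zero)
  have hm : 0 ≤ m := (sq_nonneg _).trans (hA i₀)
  have hrow : ∀ i, (A *ᵥ x) i ^ 2 ≤ m * ‖(toLp 2 x : EuclideanSpace ℝ κ)‖ ^ 2 := fun i =>
    calc (A *ᵥ x) i ^ 2
        ≤ ‖(toLp 2 (A i) : EuclideanSpace ℝ κ)‖ ^ 2 * ‖(toLp 2 x : EuclideanSpace ℝ κ)‖ ^ 2 := by
          simpa [EuclideanSpace.real_norm_sq_eq, mulVec, dotProduct] using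
            Finset.sum_mul_sq_le_sq_mul_sq Finset.univ (A i) x
      _ ≤ _ := mul_le_mul_of_nonneg_right (hA i) (sq_nonneg _)
  rw [← mulVec_mulVec, ← sq_le_sq₀ (norm_nonneg _) (by positivity),
    norm_toLp_sqrt_diagonal_mulVec_sq hdnn, mul_pow, Real.sq_sqrt hm]
  calc ∑ i, d i * (A *ᵥ x) i ^ 2 ≤ ∑ i, d i * (m * ‖(toLp 2 x : EuclideanSpace ℝ κ)‖ ^ 2) :=
        Finset.sum_le_sum fun i _ => mul_le_mul_of_nonneg_left (hrow i) (hdnn i)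
    _ = _ := by rw [← Finset.sum_mul, hdsum, one_mul]

theorem l2_opNorm_mul_sqrt_diagonal_mul_one_sub_smul_mul_le {Q P : Matrix ι ι ℝ}
    (hQ : Q.IsHermitian) (hQQ : IsIdempotentElem Q) (hPnn : ∀ i j, 0 ≤ P i j)
    (hProw : ∀ i, ∑ j, P i j = 1) (hdnn : ∀ i, 0 ≤ d i) (hstat : ∀ j, d j = ∑ i, d i * P i j)
    {γ : ℝ} (hγ : 0 ≤ γ) (A : Matrix ι κ ℝ) :
    ‖Q * diagonal (fun i => √(d i)) * (1 - γ • P) * A‖ ≤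
      (1 + γ) * ‖diagonal (fun i => √(d i)) * A‖ := by
  set D := diagonal (fun i => √(d i))
  have hsplit : Q * D * (1 - γ • P) * A = Q * (D * A - γ • (D * P * A)) := by
    simp only [Matrix.mul_assoc, Matrix.mul_sub, Matrix.sub_mul, Matrix.one_mul,
      Matrix.smul_mul, Matrix.mul_smul]
  calc ‖Q * D * (1 - γ • P) * A‖ ≤ ‖Q‖ * ‖D * A - γ • (D * P * A)‖ := by
        rw [hsplit]; exact l2_opNorm_mul _ _
    _ ≤ 1 * (‖D * A‖ + γ * ‖D * P * A‖) := by
        gcongr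
        · exact l2_opNorm_le_one_of_isHermitian_of_isIdempotentElem hQ hQQ
        · exact (norm_sub_le _ _).trans_eq (by rw [norm_smul, Real.norm_of_nonneg hγ])
    _ ≤ (1 + γ) * ‖D * A‖ := by
        have := l2_opNorm_sqrt_diagonal_mul_mul_le hPnn hProw hdnn hstat A
        nlinarith

end Weighted

theorem mspbe_gradient_lipschitz_general
    (S n : ℕ) (hS : 0 < S)
    (γ : ℝ) (hγ : γ ∈ Set.Ioo (0 : ℝ) 1)
    (P : Matrix (Fin S) (Fin S) ℝ)
    (hPnn : ∀ i j, 0 ≤ P i j) (hProw : ∀ i, ∑ j, P i j = 1)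
    (d : Fin S → ℝ) (hdnn : ∀ i, 0 ≤ d i) (hdsum : ∑ i, d i = 1)
    (hstat : ∀ j, d j = ∑ i, d i * P i j)
    (Pibar : Matrix (Fin S) (Fin S) ℝ)
    (hproj1 : Pibar.transpose = Pibar) (hproj2 : Pibar * Pibar = Pibar)
    (Φ : Matrix (Fin n) (Fin S) ℝ)
    (M : Matrix (Fin S) (Fin n) ℝ)
    (hM : M = Pibar * Matrix.diagonal (fun i => Real.sqrt (d i)) *
        ((1 : Matrix (Fin S) (Fin S) ℝ) - γ • P) * Φ.transpose)
    (c : Fin S → ℝ) (ω₁ ω₂ : Fin n → ℝ) :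
    _root_.enorm (M.transpose.mulVec (M.mulVec ω₁ - c) - M.transpose.mulVec (M.mulVec ω₂ - c)) ≤
      (1 + γ) ^ 2 *
        (Finset.univ.sup' ⟨⟨0, hS⟩, Finset.mem_univ _⟩ fun i => (_root_.enorm fun j => Φ j i) ^ 2) *
        _root_.enorm (ω₁ - ω₂) := by
  set m := Finset.univ.sup' ⟨⟨0, hS⟩, Finset.mem_univ _⟩ fun i => (_root_.enorm fun j => Φ j i) ^ 2
  have hrows : ∀ i, ‖(toLp 2 (Φᵀ i) : EuclideanSpace ℝ (Fin n))‖ ^ 2 ≤ m := fun i => by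
    rw [← enorm_eq_norm_toLp]
    exact Finset.le_sup' (fun i => (_root_.enorm fun j => Φ j i) ^ 2) (Finset.mem_univ i)
  have hm : 0 ≤ m := (sq_nonneg _).trans (hrows ⟨0, hS⟩)
  have hPibar : Pibar.IsHermitian := (conjTranspose_eq_transpose_of_trivial Pibar).trans hproj1
  have hMnorm : ‖M‖ ≤ (1 + γ) * √m := by
    rw [hM]
    calc _ ≤ (1 + γ) * ‖diagonal (fun i => √(d i)) * Φᵀ‖ :=
          l2_opNorm_mul_sqrt_diagonal_mul_one_sub_smul_mul_le hPibar hproj2 hPnn hProw hdnn hstat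
            hγ.1.le Φᵀ
      _ ≤ (1 + γ) * √m := mul_le_mul_of_nonneg_left
          (l2_opNorm_sqrt_diagonal_mul_le hdnn hdsum hrows) (by linarith [hγ.1])
  have hgrad : Mᵀ *ᵥ (M *ᵥ ω₁ - c) - Mᵀ *ᵥ (M *ᵥ ω₂ - c) = (Mᴴ * M) *ᵥ (ω₁ - ω₂) := by
    rw [← mulVec_sub, sub_sub_sub_cancel_right, ← mulVec_sub, mulVec_mulVec,
      conjTranspose_eq_transpose_of_trivial]
  rw [hgrad, enorm_eq_norm_toLp, enorm_eq_norm_toLp]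
  calc _ ≤ ‖Mᴴ * M‖ * ‖(toLp 2 (ω₁ - ω₂) : EuclideanSpace ℝ (Fin n))‖ :=
        l2_opNorm_mulVec _ (toLp 2 (ω₁ - ω₂))
    _ ≤ ((1 + γ) * √m) ^ 2 * ‖(toLp 2 (ω₁ - ω₂) : EuclideanSpace ℝ (Fin n))‖ := by
        rw [l2_opNorm_conjTranspose_mul_self, ← sq]
        gcongr
    _ = _ := by rw [mul_pow, Real.sq_sqrt hm]

/-- The gradient of the quadratic MSPBE loss `ω ↦ (1/2)‖Mω − c‖²` is Lipschitz with
constant `(1+γ)² · maxᵢ ‖φᵢ‖²`, where `M = Π̄ √D (I − γP) Φᵀ`. -/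
theorem mspbe_gradient_lipschitz
    (S n : ℕ) (hS : 0 < S) (hn : 0 < n)
    (γ : ℝ) (hγ : γ ∈ Set.Ioo (0 : ℝ) 1)
    (P : Matrix (Fin S) (Fin S) ℝ)
    (hPnn : ∀ i j, 0 ≤ P i j) (hProw : ∀ i, ∑ j, P i j = 1)
    (d : Fin S → ℝ) (hdnn : ∀ i, 0 ≤ d i) (hdsum : ∑ i, d i = 1)
    (hstat : ∀ j, d j = ∑ i, d i * P i j)
    (Pibar : Matrix (Fin S) (Fin S) ℝ)
    (hproj1 : Pibar.transpose = Pibar) (hproj2 : Pibar * Pibar = Pibar)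
    (Φ : Matrix (Fin n) (Fin S) ℝ)
    (M : Matrix (Fin S) (Fin n) ℝ)
    (hM : M = Pibar * Matrix.diagonal (fun i => Real.sqrt (d i)) *
        ((1 : Matrix (Fin S) (Fin S) ℝ) - γ • P) * Φ.transpose)
    (c : Fin S → ℝ) (ω₁ ω₂ : Fin n → ℝ) :
    _root_.enorm (M.transpose.mulVec (M.mulVec ω₁ - c) - M.transpose.mulVec (M.mulVec ω₂ - c)) ≤
      (1 + γ) ^ 2 *
        (Finset.univ.sup' ⟨⟨0, hS⟩, Finset.mem_univ _⟩ fun i => (_root_.enorm fun j => Φ j i) ^ 2) *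
        _root_.enorm (ω₁ - ω₂) :=
  mspbe_gradient_lipschitz_general S n hS γ hγ P hPnn hProw d hdnn hdsum hstat Pibar hproj1 hproj2 Φ
    M hM c ω₁ ω₂
end

section
/- Let E and F be real inner product spaces, let Θ ≥ 0, let g : E → F be Θ-Lipschitz, let D ≥ 2 and 1 ≤ B ≤ D be integers, and let d_1, …, d_D ∈ E. Let ḡ = (1/D) Σ_{i=1}^D g(d_i), d̄ = (1/D) Σ_{i=1}^D d_i, and σ² = (1/D) Σ_{i=1}^D ‖d_i − d̄‖². Then the average over all B-element subsets S of {1,…,D} of the squared deviation of the mini-batch gradient mean from the full mean satisfies (1/C(D,B)) Σ_{S ⊆ {1,…,D}, |S|=B} ‖(1/B) Σ_{i∈S} g(d_i) − ḡ‖² ≤ 2 (1 − B/D) (σ²/B) Θ², where C(D,B) is the binomial coefficient. -/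
/-!
The centred gradients `h i = g (d i) - gbar` sum to zero, so
`‖∑ i ∈ S, h i‖² = -∑ i ∈ S, ∑ j ∉ S, ⟪h i, h j⟫`, and each ordered pair `i ≠ j` is split in this
way by exactly `C(D-2, B-1)` of the `B`-subsets `S`. Averaging over `S` gives the
finite-population formula `(1 - B/D) / B * (∑ i, ‖h i‖²) / (D - 1)`. A centred family has the
least sum of squares among its translates, so `∑ i, ‖h i‖² ≤ ∑ i, ‖g (d i) - g dbar‖² ≤ Θ² D σ²`,
and `D / (D - 1) ≤ 2` gives the factor `2`.
-/

open Finset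

lemma Finset.sum_sub_inv_card_smul_sum {ι V : Type*} [AddCommGroup V] [Module ℝ V]
    (s : Finset ι) (x : ι → V) : ∑ i ∈ s, (x i - (#s : ℝ)⁻¹ • ∑ j ∈ s, x j) = 0 := by
  rcases s.eq_empty_or_nonempty with rfl | hs
  · simp
  rw [sum_sub_distrib, sum_const, ← Nat.cast_smul_eq_nsmul ℝ, smul_smul,
    mul_inv_cancel₀ (Nat.cast_ne_zero.2 hs.card_pos.ne'), one_smul, sub_self]

lemma Finset.inv_card_smul_sum_sub {ι V : Type*} [AddCommGroup V] [Module ℝ V]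
    {s : Finset ι} (hs : s.Nonempty) (x : ι → V) (c : V) :
    (#s : ℝ)⁻¹ • ∑ i ∈ s, (x i - c) = (#s : ℝ)⁻¹ • ∑ i ∈ s, x i - c := by
  rw [sum_sub_distrib, sum_const, smul_sub, ← Nat.cast_smul_eq_nsmul ℝ, smul_smul,
    inv_mul_cancel₀ (Nat.cast_ne_zero.2 hs.card_pos.ne'), one_smul]

lemma sum_norm_sq_le_sum_norm_add_sq {ι V : Type*} [Fintype ι] [NormedAddCommGroup V]
    [InnerProductSpace ℝ V] {v : ι → V} (hv : ∑ i, v i = 0) (c : V) :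
    ∑ i, ‖v i‖ ^ 2 ≤ ∑ i, ‖v i + c‖ ^ 2 := by
  simp_rw [norm_add_sq_real, sum_add_distrib, ← mul_sum, ← sum_inner, hv, inner_zero_left,
    mul_zero, add_zero]
  exact le_add_of_nonneg_right (by positivity)

lemma Finset.card_filter_mem_notMem_powersetCard_univ {ι : Type*} [Fintype ι] [DecidableEq ι]
    {i j : ι} (hij : i ≠ j) {k : ℕ} (hk : 1 ≤ k) :
    #{S ∈ powersetCard k (univ : Finset ι) | i ∈ S ∧ j ∉ S} =
      (Fintype.card ι - 2).choose (k - 1) := by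
  have hfilter : {S ∈ powersetCard k (univ : Finset ι) | i ∈ S ∧ j ∉ S} =
      {S ∈ powersetCard k (univ.erase j) | {i} ⊆ S} := by
    ext S
    simp only [mem_filter, mem_powersetCard, subset_erase, singleton_subset_iff, subset_univ,
      true_and]
    tauto
  rw [hfilter, card_filter_powersetCard_subset _ _ _ (by simpa using hij) (by simpa using hk),
    card_erase_of_mem (mem_univ j), card_univ, card_singleton, Nat.sub_sub]

lemma Finset.sum_sum_sum_compl_eq_sum_card_nsmul {ι M : Type*} [Fintype ι] [DecidableEq ι]
    [AddCommMonoid M] (𝒜 : Finset (Finset ι)) (f : ι → ι → M) :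
    ∑ S ∈ 𝒜, ∑ i ∈ S, ∑ j ∈ Sᶜ, f i j = ∑ i, ∑ j, #{S ∈ 𝒜 | i ∈ S ∧ j ∉ S} • f i j := by
  have hind (S : Finset ι) : ∑ i ∈ S, ∑ j ∈ Sᶜ, f i j =
      ∑ i, ∑ j, if i ∈ S ∧ j ∉ S then f i j else 0 := by
    simp only [ite_and, ← ite_sum_zero, sum_ite_mem, univ_inter, ← mem_compl]
  have hcount (i j : ι) : #{S ∈ 𝒜 | i ∈ S ∧ j ∉ S} • f i j =
      ∑ S ∈ 𝒜, if i ∈ S ∧ j ∉ S then f i j else 0 := by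
    rw [← sum_filter, sum_const]
  simp_rw [hind, hcount]
  rw [sum_comm]
  exact sum_congr rfl fun i _ => sum_comm

lemma norm_sum_sq_eq_neg_sum_inner_compl {ι V : Type*} [Fintype ι] [DecidableEq ι]
    [NormedAddCommGroup V] [InnerProductSpace ℝ V] {v : ι → V} (hv : ∑ i, v i = 0)
    (s : Finset ι) :
    ‖∑ i ∈ s, v i‖ ^ 2 = -∑ i ∈ s, ∑ j ∈ sᶜ, inner ℝ (v i) (v j) := by
  have hcompl : ∑ j ∈ sᶜ, v j = -∑ i ∈ s, v i :=
    eq_neg_of_add_eq_zero_right ((sum_add_sum_compl s v).trans hv)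
  simp_rw [← inner_sum, ← sum_inner, hcompl, inner_neg_right, neg_neg, real_inner_self_eq_norm_sq]

lemma sum_powersetCard_norm_sum_sq {ι V : Type*} [Fintype ι] [DecidableEq ι]
    [NormedAddCommGroup V] [InnerProductSpace ℝ V] {v : ι → V} (hv : ∑ i, v i = 0)
    {k : ℕ} (hk : 1 ≤ k) :
    ∑ S ∈ powersetCard k (univ : Finset ι), ‖∑ i ∈ S, v i‖ ^ 2 =
      (Fintype.card ι - 2).choose (k - 1) * ∑ i, ‖v i‖ ^ 2 := by
  have hcount (i j : ι) : (#{S ∈ powersetCard k univ | i ∈ S ∧ j ∉ S} : ℝ) =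
      if i = j then (0 : ℝ) else ((Fintype.card ι - 2).choose (k - 1) : ℕ) := by
    split_ifs with hij
    · simp [hij]
    · rw [card_filter_mem_notMem_powersetCard_univ hij hk]
  have hrest (i : ι) : ∑ j ∈ univ.erase i, v j = -v i :=
    eq_neg_of_add_eq_zero_right ((add_sum_erase _ v (mem_univ i)).trans hv)
  calc ∑ S ∈ powersetCard k univ, ‖∑ i ∈ S, v i‖ ^ 2
      = -∑ i, ∑ j, #{S ∈ powersetCard k univ | i ∈ S ∧ j ∉ S} • inner ℝ (v i) (v j) := by
        simp_rw [norm_sum_sq_eq_neg_sum_inner_compl hv]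
        rw [sum_neg_distrib, sum_sum_sum_compl_eq_sum_card_nsmul]
    _ = -∑ i, ((Fintype.card ι - 2).choose (k - 1) : ℝ) *
          inner ℝ (v i) (∑ j ∈ univ.erase i, v j) := by
        simp_rw [nsmul_eq_mul, hcount, ite_mul, zero_mul, sum_ite, sum_const_zero, zero_add,
          filter_ne, ← mul_sum, inner_sum]
    _ = (Fintype.card ι - 2).choose (k - 1) * ∑ i, ‖v i‖ ^ 2 := by
        simp_rw [hrest, inner_neg_right, real_inner_self_eq_norm_sq, mul_neg, sum_neg_distrib,
          neg_neg, mul_sum]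

lemma Nat.add_two_mul_add_one_mul_choose_eq (n k : ℕ) :
    (n + 2) * (n + 1) * n.choose k = (k + 1) * (n + 1 - k) * (n + 2).choose (k + 1) := by
  calc (n + 2) * (n + 1) * n.choose k = (n + 1 + 1) * (n + 1).choose k * (n + 1 - k) := by
        rw [mul_assoc _ ((n + 1).choose k), ← Nat.choose_mul_succ_eq]; ring
    _ = _ := by rw [Nat.add_one_mul_choose_eq]; ring

lemma average_norm_sq_inv_smul_sum_powersetCard {ι V : Type*} [Fintype ι] [DecidableEq ι]
    [NormedAddCommGroup V] [InnerProductSpace ℝ V] {v : ι → V} (hv : ∑ i, v i = 0)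
    {k : ℕ} (hk : 1 ≤ k) (hkn : k ≤ Fintype.card ι) (hn : 2 ≤ Fintype.card ι) :
    ((Fintype.card ι).choose k : ℝ)⁻¹ *
        ∑ S ∈ powersetCard k (univ : Finset ι), ‖(k : ℝ)⁻¹ • ∑ i ∈ S, v i‖ ^ 2 =
      (1 - k / Fintype.card ι) / k * ((∑ i, ‖v i‖ ^ 2) / (Fintype.card ι - 1)) := by
  simp_rw [norm_smul, mul_pow, ← mul_sum, sum_powersetCard_norm_sum_sq hv hk, norm_inv,
    RCLike.norm_natCast]
  obtain ⟨m, hm⟩ := Nat.exists_eq_add_of_le' hn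
  obtain ⟨b, rfl⟩ := Nat.exists_eq_add_of_le' hk
  have hchoose : ((m + 2) * (m + 1) * m.choose b : ℝ) =
      (b + 1) * (m + 1 - b) * (m + 2).choose (b + 1) := by
    have h := congrArg (Nat.cast (R := ℝ)) (Nat.add_two_mul_add_one_mul_choose_eq m b)
    push_cast [Nat.cast_sub (show b ≤ m + 1 by omega)] at h
    exact h
  have hpos : (0 : ℝ) < (m + 2).choose (b + 1) := by
    exact_mod_cast Nat.choose_pos (hm ▸ hkn)
  rw [hm]
  push_cast
  rw [show (m : ℝ) + 2 - 1 = m + 1 by ring]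
  field_simp
  linear_combination (∑ i, ‖v i‖ ^ 2) * hchoose

theorem minibatch_sgd_noise_bound_general
    (E F : Type*) [NormedAddCommGroup E] [InnerProductSpace ℝ E]
    [NormedAddCommGroup F] [InnerProductSpace ℝ F]
    (Θ : ℝ) (g : E → F)
    (hg : ∀ x y, ‖g x - g y‖ ≤ Θ * ‖x - y‖)
    (D B : ℕ) (hD : 2 ≤ D) (hB1 : 1 ≤ B) (hBD : B ≤ D)
    (d : Fin D → E)
    (gbar : F) (hgbar : gbar = (D : ℝ)⁻¹ • ∑ i, g (d i))
    (dbar : E)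
    (σ2 : ℝ) (hσ2 : σ2 = (D : ℝ)⁻¹ * ∑ i, ‖d i - dbar‖ ^ 2) :
    (D.choose B : ℝ)⁻¹ *
        ∑ s ∈ Finset.powersetCard B (Finset.univ : Finset (Fin D)),
          ‖((B : ℝ)⁻¹ • ∑ i ∈ s, g (d i)) - gbar‖ ^ 2 ≤
      2 * (1 - (B : ℝ) / (D : ℝ)) * (σ2 / (B : ℝ)) * Θ ^ 2 := by
  have hcentered : ∑ i, (g (d i) - gbar) = 0 := by
    simpa [hgbar] using sum_sub_inv_card_smul_sum univ (fun i => g (d i))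
  have hbatch : ∀ s ∈ powersetCard B (univ : Finset (Fin D)),
      (B : ℝ)⁻¹ • ∑ i ∈ s, g (d i) - gbar = (B : ℝ)⁻¹ • ∑ i ∈ s, (g (d i) - gbar) := by
    intro s hs
    obtain ⟨-, rfl⟩ := mem_powersetCard.1 hs
    exact (inv_card_smul_sum_sub (card_pos.1 hB1) _ _).symm
  have hspread : ∑ i, ‖g (d i) - gbar‖ ^ 2 ≤ Θ ^ 2 * (D * σ2) :=
    calc ∑ i, ‖g (d i) - gbar‖ ^ 2 ≤ ∑ i, ‖g (d i) - g dbar‖ ^ 2 := by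
          simpa only [sub_add_sub_cancel] using
            sum_norm_sq_le_sum_norm_add_sq hcentered (gbar - g dbar)
      _ ≤ ∑ i, (Θ * ‖d i - dbar‖) ^ 2 := by gcongr with i; exact hg _ _
      _ = Θ ^ 2 * (D * σ2) := by
          rw [hσ2, mul_inv_cancel_left₀ (by positivity)]; simp_rw [mul_pow, mul_sum]
  have hσ2_nonneg : 0 ≤ σ2 := by rw [hσ2]; positivity
  have hDR : (2 : ℝ) ≤ D := by exact_mod_cast hD
  have hvar : (∑ i, ‖g (d i) - gbar‖ ^ 2) / (D - 1) ≤ 2 * (Θ ^ 2 * σ2) := by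
    rw [div_le_iff₀ (by linarith)]
    nlinarith [mul_nonneg (sq_nonneg Θ) hσ2_nonneg]
  have hfpc := average_norm_sq_inv_smul_sum_powersetCard hcentered hB1 (by simpa using hBD)
    (by simpa using hD)
  simp only [Fintype.card_fin] at hfpc
  have hBD' : (B : ℝ) / D ≤ 1 := div_le_one_of_le₀ (by exact_mod_cast hBD) (by positivity)
  calc _ = (1 - (B : ℝ) / D) / B * ((∑ i, ‖g (d i) - gbar‖ ^ 2) / (D - 1)) := by
        rw [sum_congr rfl fun s hs => by rw [hbatch s hs], hfpc]
    _ ≤ (1 - (B : ℝ) / D) / B * (2 * (Θ ^ 2 * σ2)) := by gcongr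
    _ = 2 * (1 - (B : ℝ) / D) * (σ2 / B) * Θ ^ 2 := by ring

/-- Mini-batch SGD noise characterization: if the per-sample gradient map `g` is `Θ`-Lipschitz
in the data point and a mini-batch of size `B` is drawn uniformly without replacement from a
dataset of size `D ≥ 2` with data variance `σ²`, then the expected squared deviation of the
mini-batch gradient mean from the full gradient mean is at most `2(1 − B/D)(σ²/B)Θ²`. -/
theorem minibatch_sgd_noise_bound
    (E F : Type*) [NormedAddCommGroup E] [InnerProductSpace ℝ E]
    [NormedAddCommGroup F] [InnerProductSpace ℝ F]
    (Θ : ℝ) (hΘ : 0 ≤ Θ) (g : E → F)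
    (hg : ∀ x y, ‖g x - g y‖ ≤ Θ * ‖x - y‖)
    (D B : ℕ) (hD : 2 ≤ D) (hB1 : 1 ≤ B) (hBD : B ≤ D)
    (d : Fin D → E)
    (gbar : F) (hgbar : gbar = (D : ℝ)⁻¹ • ∑ i, g (d i))
    (dbar : E) (hdbar : dbar = (D : ℝ)⁻¹ • ∑ i, d i)
    (σ2 : ℝ) (hσ2 : σ2 = (D : ℝ)⁻¹ * ∑ i, ‖d i - dbar‖ ^ 2) :
    (D.choose B : ℝ)⁻¹ *
        ∑ s ∈ Finset.powersetCard B (Finset.univ : Finset (Fin D)),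
          ‖((B : ℝ)⁻¹ • ∑ i ∈ s, g (d i)) - gbar‖ ^ 2 ≤
      2 * (1 - (B : ℝ) / (D : ℝ)) * (σ2 / (B : ℝ)) * Θ ^ 2 :=
  minibatch_sgd_noise_bound_general E F Θ g hg D B hD hB1 hBD d gbar hgbar dbar σ2 hσ2
end
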